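/- arXiv:2406.10287 — 4 statements merged into one kernel-verified Lean document; each statement's English description precedes it below -/
import Mathlib

section
/- Let G=(V,E) be a finite simple graph, A ⊆ V a set of attacked vertices, and k a natural number. Let D ⊆ V\A be the set of non-attacked vertices of degree exactly one in G. Then there exists a set C ⊆ V with |C| ≤ k such that C ∩ D = ∅ and C minimizes the objective value Φ(G−C) among all subsets of V of size at most k. (Proposition 1 of the paper.) -/
/-- The graph obtained from `G` by deleting the vertices in `C` (removing all
edges incident to `C`; the remaining adjacency is that of the induced subgraph on `Cᶜ`). -/
def delVerts {V : Type*} (G : SimpleGraph V) (C : Set V) : SimpleGraph V where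
  Adj u v := G.Adj u v ∧ u ∉ C ∧ v ∉ C
  symm := ⟨fun u v h => ⟨h.1.symm, h.2.2, h.2.1⟩⟩
  loopless := ⟨fun u h => G.loopless.irrefl u h.1⟩

/-- The set of unordered pairs of distinct vertices forming a vulnerable connection:
joined by a path, and at least one endpoint is attacked. -/
def vulPairs {V : Type*} (G : SimpleGraph V) (A : Set V) : Set (Sym2 V) :=
  {p | ∃ u v, p = s(u, v) ∧ u ≠ v ∧ G.Reachable u v ∧ (u ∈ A ∨ v ∈ A)}

/-- The `A`-vulnerability of a graph. -/
noncomputable def vul {V : Type*} (G : SimpleGraph V) (A : Set V) : ℕ :=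
  (vulPairs G A).ncard

/-- The set of unordered pairs of distinct vertices forming a healthy connection:
joined by a path, and no endpoint is attacked. -/
def healPairs {V : Type*} (G : SimpleGraph V) (A : Set V) : Set (Sym2 V) :=
  {p | ∃ u v, p = s(u, v) ∧ u ≠ v ∧ G.Reachable u v ∧ u ∉ A ∧ v ∉ A}

/-- The `A`-healthiness of a graph. -/
noncomputable def heal {V : Type*} (G : SimpleGraph V) (A : Set V) : ℕ :=
  (healPairs G A).ncard

/-- The objective value `Φ(G−C) = (|V|²+1)·vul(G−C) − heal(G−C)`, as an integer. -/
noncomputable def Phi {V : Type*} [Fintype V] (G : SimpleGraph V) (A C : Set V) : ℤ :=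
  ((Fintype.card V : ℤ) ^ 2 + 1) * (vul (delVerts G C) A : ℤ) - (heal (delVerts G C) A : ℤ)

/-- The vertex set of the connected component of `v` in `H` (including `v`). -/
def comp {V : Type*} (H : SimpleGraph V) (v : V) : Set V :=
  {u | H.Reachable v u}

section Aux
variable {V : Type*}

lemma delVerts_le (G : SimpleGraph V) (C : Set V) : delVerts G C ≤ G :=
  fun _ _ h => h.1

lemma delVerts_mono (G : SimpleGraph V) {C₁ C₂ : Set V} (h : C₁ ⊆ C₂) :
    delVerts G C₂ ≤ delVerts G C₁ :=
  fun _ _ hadj => ⟨hadj.1, fun hu => hadj.2.1 (h hu), fun hv => hadj.2.2 (h hv)⟩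

lemma vulPairs_mono {H H' : SimpleGraph V} (h : H ≤ H') (A : Set V) :
    vulPairs H A ⊆ vulPairs H' A := by
  rintro p ⟨u, v, rfl, hne, hr, hA⟩
  exact ⟨u, v, rfl, hne, hr.mono h, hA⟩

lemma healPairs_mono {H H' : SimpleGraph V} (h : H ≤ H') (A : Set V) :
    healPairs H A ⊆ healPairs H' A := by
  rintro p ⟨u, v, rfl, hne, hr, hA⟩
  exact ⟨u, v, rfl, hne, hr.mono h, hA⟩

lemma noAdj_not_reachable {H : SimpleGraph V} {w x : V}
    (h : ∀ y, ¬ H.Adj w y) (hx : x ≠ w) : ¬ H.Reachable w x := by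
  rintro ⟨p⟩
  cases p with
  | nil => exact hx rfl
  | cons h' q => exact h _ h'

lemma walk_avoid {H : SimpleGraph V} (w : V) {u v : V} (p : H.Walk u v)
    (hw : w ∉ p.support) : (delVerts H {w}).Reachable u v := by
  induction p with
  | nil => exact SimpleGraph.Reachable.refl _
  | @cons _ b _ h q ih =>
    simp only [SimpleGraph.Walk.support_cons, List.mem_cons] at hw
    push_neg at hw
    have hb : w ∉ q.support := hw.2
    have hbw : b ≠ w := fun hh => hb (hh ▸ q.start_mem_support)
    have hadj : (delVerts H {w}).Adj _ b :=
      ⟨h, by simpa using (Ne.symm hw.1), by simpa using hbw⟩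
    exact hadj.reachable.trans (ih hb)

lemma leaf_reach {H : SimpleGraph V} {c w : V} (hc : ∀ x, H.Adj c x → x = w) :
    ∀ n {u v : V}, u ≠ c → v ≠ c → (p : H.Walk u v) → p.length ≤ n →
      (delVerts H {c}).Reachable u v := by
  intro n
  induction n with
  | zero =>
    intro u v hu hv p hp
    have := SimpleGraph.Walk.eq_of_length_eq_zero (Nat.le_zero.mp hp)
    subst this
    exact SimpleGraph.Reachable.refl _
  | succ n ih =>
    intro u v hu hv p hp
    cases p with
    | nil => exact SimpleGraph.Reachable.refl _
    | @cons _ b _ h q =>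
      by_cases hb : b = c
      · subst hb
        have hu' : u = w := hc u h.symm
        cases q with
        | nil => exact absurd rfl hv
        | @cons _ y _ h2 q2 =>
          have hy : y = w := hc y h2
          subst hu'
          subst hy
          simp only [SimpleGraph.Walk.length_cons] at hp
          exact ih hu hv q2 (by omega)
      · have hadj : (delVerts H {c}).Adj u b :=
          ⟨h, by simpa using hu, by simpa using hb⟩
        simp only [SimpleGraph.Walk.length_cons] at hp
        exact hadj.reachable.trans (ih hb hv q (by omega))

lemma leaf_reachable {H : SimpleGraph V} {c w : V} (hc : ∀ x, H.Adj c x → x = w)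
    {u v : V} (hu : u ≠ c) (hv : v ≠ c) (hr : H.Reachable u v) :
    (delVerts H {c}).Reachable u v := by
  obtain ⟨p⟩ := hr
  exact leaf_reach hc p.length hu hv p le_rfl

lemma heal_le [Fintype V] (H : SimpleGraph V) (A : Set V) :
    heal H A ≤ Fintype.card V ^ 2 := by
  classical
  have h1 : heal H A ≤ (Set.univ : Set (Sym2 V)).ncard :=
    Set.ncard_le_ncard (Set.subset_univ _) (Set.toFinite _)
  rw [Set.ncard_univ, Nat.card_eq_fintype_card, Sym2.card] at h1
  refine h1.trans ?_
  rw [Nat.choose_two_right]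
  have hn : Fintype.card V ≤ Fintype.card V ^ 2 :=
    Nat.le_self_pow (by norm_num) _
  have : (Fintype.card V + 1) * (Fintype.card V + 1 - 1) ≤ 2 * Fintype.card V ^ 2 := by
    simp only [Nat.add_sub_cancel]
    nlinarith [hn]
  exact Nat.div_le_of_le_mul this

end Aux

section Key
variable {V : Type*}

lemma not_mem_vulPairs {H : SimpleGraph V} {A : Set V} {a b : V}
    (h : ¬ H.Reachable a b) : s(a, b) ∉ vulPairs H A := by
  rintro ⟨u, v, heq, hne, hr, hA⟩
  rcases Sym2.eq_iff.mp heq with ⟨rfl, rfl⟩ | ⟨rfl, rfl⟩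
  · exact h hr
  · exact h hr.symm

lemma vul_ssub (H : SimpleGraph V) (A : Set V) (w x : V) (hx : x ∈ A)
    (hwx : H.Reachable w x)
    (hlost : ∃ u v, u ≠ v ∧ H.Reachable u v ∧ ¬ (delVerts H {w}).Reachable u v) :
    vulPairs (delVerts H {w}) A ⊂ vulPairs H A := by
  classical
  rw [Set.ssubset_iff_of_subset (vulPairs_mono (delVerts_le H {w}) A)]
  obtain ⟨u, v, huv, hr, hnr⟩ := hlost
  have hiso : ∀ y, ¬ (delVerts H {w}).Adj w y := fun y h => h.2.1 rfl
  have hnw : ∀ z, z ≠ w → ¬ (delVerts H {w}).Reachable w z := by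
    intro z hz
    exact noAdj_not_reachable hiso hz
  rcases eq_or_ne u w with heq | hu
  · subst heq
    rcases eq_or_ne x u with heq2 | hxw
    · subst heq2
      exact ⟨s(x, v), ⟨x, v, rfl, huv, hr, Or.inl hx⟩, not_mem_vulPairs hnr⟩
    · exact ⟨s(u, x), ⟨u, x, rfl, Ne.symm hxw, hwx, Or.inr hx⟩,
        not_mem_vulPairs (hnw x hxw)⟩
  rcases eq_or_ne v w with heq | hv
  · subst heq
    rcases eq_or_ne x v with heq2 | hxw
    · subst heq2
      exact ⟨s(u, x), ⟨u, x, rfl, huv, hr, Or.inr hx⟩, not_mem_vulPairs hnr⟩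
    · exact ⟨s(v, x), ⟨v, x, rfl, Ne.symm hxw, hwx, Or.inr hx⟩,
        not_mem_vulPairs (hnw x hxw)⟩
  -- main case, u ≠ w, v ≠ w
  have hr' := hr
  obtain ⟨p⟩ := hr'
  by_cases hws : w ∈ p.support
  · have h1 : H.Reachable u w := ⟨p.takeUntil w hws⟩
    have h2 : H.Reachable w v := ⟨p.dropUntil w hws⟩
    have hux : H.Reachable u x := h1.trans hwx
    have hvx : H.Reachable v x := (h2.symm.trans hwx)
    by_cases h3 : (delVerts H {w}).Reachable u x
    · have h4 : ¬ (delVerts H {w}).Reachable v x := fun h => hnr (h3.trans h.symm)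
      rcases eq_or_ne v x with rfl | hvx'
      · exact ⟨s(u, v), ⟨u, v, rfl, huv, hr, Or.inr hx⟩, not_mem_vulPairs hnr⟩
      · exact ⟨s(v, x), ⟨v, x, rfl, hvx', hvx, Or.inr hx⟩, not_mem_vulPairs h4⟩
    · rcases eq_or_ne u x with rfl | hux'
      · exact ⟨s(u, v), ⟨u, v, rfl, huv, hr, Or.inl hx⟩, not_mem_vulPairs hnr⟩
      · exact ⟨s(u, x), ⟨u, x, rfl, hux', hux, Or.inr hx⟩, not_mem_vulPairs h3⟩
  · exact absurd (walk_avoid w p hws) hnr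

lemma delVerts_delVerts_leaf (G : SimpleGraph V) (C : Set V) (c : V) (hcC : c ∈ C) :
    delVerts (delVerts G (C \ {c})) {c} = delVerts G C := by
  ext u v
  constructor
  · rintro ⟨⟨hadj, hu, hv⟩, hu2, hv2⟩
    have hu2' : u ≠ c := by simpa using hu2
    have hv2' : v ≠ c := by simpa using hv2
    refine ⟨hadj, fun h => hu ⟨h, by simpa using hu2'⟩, fun h => hv ⟨h, by simpa using hv2'⟩⟩
  · rintro ⟨hadj, hu, hv⟩
    have hu2 : u ≠ c := fun h => hu (h ▸ hcC)
    have hv2 : v ≠ c := fun h => hv (h ▸ hcC)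
    exact ⟨⟨hadj, fun h => hu h.1, fun h => hv h.1⟩, by simpa using hu2, by simpa using hv2⟩

lemma delVerts_swap (G : SimpleGraph V) (C : Set V) (c w : V) (hcC : c ∈ C)
    (huniq : ∀ x, G.Adj c x → x = w) :
    delVerts G ((C \ {c}) ∪ {w}) = delVerts (delVerts G C) {w} := by
  ext u v
  constructor
  · rintro ⟨hadj, hu, hv⟩
    have hu2 : u ≠ w := fun h => hu (Set.mem_union_right _ (by simp [h]))
    have hv2 : v ≠ w := fun h => hv (Set.mem_union_right _ (by simp [h]))
    have hu1 : u ∉ C \ {c} := fun h => hu (Set.mem_union_left _ h)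
    have hv1 : v ∉ C \ {c} := fun h => hv (Set.mem_union_left _ h)
    have huC : u ∉ C := by
      intro h
      have huc : u = c := by
        by_contra hc'
        exact hu1 ⟨h, by simpa using hc'⟩
      subst huc
      exact hv2 (huniq v hadj)
    have hvC : v ∉ C := by
      intro h
      have hvc : v = c := by
        by_contra hc'
        exact hv1 ⟨h, by simpa using hc'⟩
      subst hvc
      exact hu2 (huniq u hadj.symm)
    exact ⟨⟨hadj, huC, hvC⟩, by simpa using hu2, by simpa using hv2⟩
  · rintro ⟨⟨hadj, hu, hv⟩, hu2, hv2⟩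
    refine ⟨hadj, ?_, ?_⟩
    · intro h
      rcases h with h | h
      · exact hu h.1
      · exact hu2 h
    · intro h
      rcases h with h | h
      · exact hv h.1
      · exact hv2 h

end Key

section Replace
variable {V : Type*}

lemma replace_lemma [Fintype V] (G : SimpleGraph V) (A D C : Set V)
    (hD : D = {v | v ∉ A ∧ ∃! w, G.Adj v w})
    (c : V) (hc : c ∈ C ∩ D) :
    ∃ C' : Set V, C'.ncard ≤ C.ncard ∧ Phi G A C' ≤ Phi G A C ∧
      C' ∩ D ⊆ (C ∩ D) \ {c} := by
  classical
  obtain ⟨hcC, hcD⟩ := hc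
  rw [hD] at hcD
  obtain ⟨hcA, w, hadj, huniq⟩ := hcD
  by_cases hP : w ∉ C ∧ ∃ x ∈ A, (delVerts G C).Reachable w x
  · obtain ⟨hwC, x, hxA, hwx⟩ := hP
    refine ⟨(C \ {c}) ∪ {w}, ?_, ?_, ?_⟩
    · calc ((C \ {c}) ∪ {w}).ncard ≤ (C \ {c}).ncard + ({w} : Set V).ncard :=
            Set.ncard_union_le _ _
        _ = (C \ {c}).ncard + 1 := by rw [Set.ncard_singleton]
        _ = C.ncard := Set.ncard_diff_singleton_add_one hcC (Set.toFinite C)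
    · have E2 := delVerts_swap G C c w hcC huniq
      by_cases hlost : ∃ u v, u ≠ v ∧ (delVerts G C).Reachable u v ∧
          ¬ (delVerts (delVerts G C) {w}).Reachable u v
      · have hss := vul_ssub (delVerts G C) A w x hxA hwx hlost
        have h1 : vul (delVerts (delVerts G C) {w}) A < vul (delVerts G C) A :=
          Set.ncard_lt_ncard hss (Set.toFinite _)
        have h2 : heal (delVerts G C) A ≤ Fintype.card V ^ 2 := heal_le _ A
        simp only [Phi, E2]
        have hM : (0:ℤ) ≤ (Fintype.card V : ℤ) ^ 2 + 1 := by positivity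
        have h4 : ((Fintype.card V : ℤ) ^ 2 + 1) *
              ((vul (delVerts (delVerts G C) {w}) A : ℤ) + 1)
            ≤ ((Fintype.card V : ℤ) ^ 2 + 1) * (vul (delVerts G C) A : ℤ) := by
          apply mul_le_mul_of_nonneg_left _ hM
          exact_mod_cast h1
        have h5 : (heal (delVerts G C) A : ℤ) ≤ (Fintype.card V : ℤ) ^ 2 := by
          exact_mod_cast h2
        have h6 : (0:ℤ) ≤ (heal (delVerts (delVerts G C) {w}) A : ℤ) :=
          Int.natCast_nonneg _
        linarith
      · push_neg at hlost
        have e1 : vulPairs (delVerts (delVerts G C) {w}) A = vulPairs (delVerts G C) A := by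
          apply subset_antisymm (vulPairs_mono (delVerts_le _ _) A)
          rintro p ⟨u, v, rfl, hne, hr, hA⟩
          exact ⟨u, v, rfl, hne, hlost u v hne hr, hA⟩
        have e2 : healPairs (delVerts (delVerts G C) {w}) A = healPairs (delVerts G C) A := by
          apply subset_antisymm (healPairs_mono (delVerts_le _ _) A)
          rintro p ⟨u, v, rfl, hne, hr, hA⟩
          exact ⟨u, v, rfl, hne, hlost u v hne hr, hA⟩
        simp only [Phi, E2, vul, heal, e1, e2, le_refl]
    · intro u hu
      obtain ⟨hu1, huD⟩ := hu
      have hwD : w ∉ D := by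
        intro hwD
        rw [hD] at hwD
        obtain ⟨hwA, w', hadj', huniq'⟩ := hwD
        have hcw : c = w' := huniq' c hadj.symm
        have hiso : ∀ y, ¬ (delVerts G C).Adj w y := by
          intro y hy
          have hyw' : y = w' := huniq' y hy.1
          have hyc : y = c := hyw'.trans hcw.symm
          exact hy.2.2 (hyc.symm ▸ hcC)
        have hxw' : x ≠ w := fun h => hwA (h ▸ hxA)
        exact noAdj_not_reachable hiso hxw' hwx
      rcases hu1 with h | h
      · exact ⟨⟨h.1, huD⟩, h.2⟩
      · have : u = w := h
        exact absurd (this ▸ huD) hwD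
  · refine ⟨C \ {c}, Set.ncard_le_ncard Set.diff_subset (Set.toFinite C), ?_,
      fun u hu => ⟨⟨hu.1.1, hu.2⟩, hu.1.2⟩⟩
    have hcleaf : ∀ y, (delVerts G (C \ {c})).Adj c y → y = w := fun y h => huniq y h.1
    have E1 := delVerts_delVerts_leaf G C c hcC
    have hno : ∀ x, x ∈ A → ¬ (delVerts G (C \ {c})).Reachable c x := by
      intro x hxA hre
      have hxc : x ≠ c := fun h => hcA (h ▸ hxA)
      obtain ⟨p⟩ := hre
      cases p with
      | nil => exact hxc rfl
      | @cons _ y _ h q =>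
        have hyw : y = w := hcleaf y h
        subst hyw
        have hwc : y ≠ c := h.1.ne'
        have hwC : y ∉ C := by
          intro hw
          exact h.2.2 ⟨hw, by simpa using hwc⟩
        have hr0 : (delVerts G (C \ {c})).Reachable y x := ⟨q⟩
        have hrH := leaf_reachable hcleaf hwc hxc hr0
        rw [E1] at hrH
        exact hP ⟨hwC, x, hxA, hrH⟩
    have hvul : vulPairs (delVerts G (C \ {c})) A = vulPairs (delVerts G C) A := by
      apply subset_antisymm
      · rintro p ⟨u, v, rfl, hne, hr, hA⟩
        have huc : u ≠ c := by
          rintro rfl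
          rcases hA with h | h
          · exact hcA h
          · exact hno v h hr
        have hvc : v ≠ c := by
          rintro rfl
          rcases hA with h | h
          · exact hno u h hr.symm
          · exact hcA h
        have hrr := leaf_reachable hcleaf huc hvc hr
        rw [E1] at hrr
        exact ⟨u, v, rfl, hne, hrr, hA⟩
      · exact vulPairs_mono (delVerts_mono G Set.diff_subset) A
    have h2 : heal (delVerts G C) A ≤ heal (delVerts G (C \ {c})) A :=
      Set.ncard_le_ncard (healPairs_mono (delVerts_mono G Set.diff_subset) A)
        (Set.toFinite _)
    have hveq : vul (delVerts G (C \ {c})) A = vul (delVerts G C) A := by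
      unfold vul
      rw [hvul]
    simp only [Phi, hveq]
    have h2' : (heal (delVerts G C) A : ℤ) ≤ (heal (delVerts G (C \ {c})) A : ℤ) := by
      exact_mod_cast h2
    linarith

end Replace

/-- Proposition 1: there is an optimal deletion set of size at most `k` avoiding
all non-attacked degree-one vertices. -/
theorem optimal_solution_avoiding_nonattacked_degree_one
    {V : Type*} [Fintype V] (G : SimpleGraph V) (A : Set V) (k : ℕ)
    (D : Set V) (hD : D = {v | v ∉ A ∧ ∃! w, G.Adj v w}) :
    ∃ C : Set V, C.ncard ≤ k ∧ C ∩ D = ∅ ∧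
      ∀ C' : Set V, C'.ncard ≤ k → Phi G A C ≤ Phi G A C' := by
  classical
  obtain ⟨C, hCk, hPhiMin⟩ := Set.exists_min_image {C : Set V | C.ncard ≤ k} (Phi G A)
    (Set.toFinite _) ⟨∅, by simp⟩
  obtain ⟨C₂, hC₂, hmin2⟩ := Set.exists_min_image
    {C' : Set V | C'.ncard ≤ k ∧ Phi G A C' ≤ Phi G A C} (fun C' => (C' ∩ D).ncard)
    (Set.toFinite _) ⟨C, hCk, le_refl _⟩
  obtain ⟨hk2, hphi2⟩ := hC₂
  refine ⟨C₂, hk2, ?_, fun C' hC' => le_trans hphi2 (hPhiMin C' hC')⟩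
  by_contra hne
  obtain ⟨c, hc⟩ := Set.nonempty_iff_ne_empty.mpr hne
  obtain ⟨C₃, h3k, h3phi, h3sub⟩ := replace_lemma G A D C₂ hD c hc
  have hlt : (C₃ ∩ D).ncard < (C₂ ∩ D).ncard := by
    have hle : (C₃ ∩ D).ncard ≤ ((C₂ ∩ D) \ {c}).ncard :=
      Set.ncard_le_ncard h3sub (Set.toFinite _)
    have hone := Set.ncard_diff_singleton_add_one hc (Set.toFinite (C₂ ∩ D))
    omega
  have hmem : C₃ ∈ {C' : Set V | C'.ncard ≤ k ∧ Phi G A C' ≤ Phi G A C} :=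
    ⟨h3k.trans hk2, h3phi.trans hphi2⟩
  exact absurd (hmin2 C₃ hmem) (not_le.mpr hlt)
end

section
/- Let G=(V,E) be a finite simple graph, A ⊆ V, and let D ⊆ V\A be the set of non-attacked degree-one vertices of G. For every set C ⊆ V with C ∩ D ≠ ∅ there exists a set C' ⊆ V such that (a) |C'| ≤ |C|, (b) Φ(G−C') ≤ Φ(G−C), and (c) |C' ∩ D| < |C ∩ D|. (The transformation step in the proof of Proposition 1.) -/
section Aux

variable {V : Type*}

/-- If `u` has no neighbors, everything reachable from `u` equals `u`. -/
lemma reach_self_of_iso {H : SimpleGraph V} {u x : V}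
    (h : ∀ z, ¬ H.Adj u z) (hr : H.Reachable u x) : x = u := by
  obtain ⟨p⟩ := hr
  cases p with
  | nil => rfl
  | cons hadj _ => exact absurd hadj (h _)

/-- Walks in `G − (C \ {d})`, where `d ∈ C` is a pendant vertex with unique
neighbor `w`, project to reachability in `G − C` after replacing `d` by `w`. -/
lemma pendant_walk [DecidableEq V] {G : SimpleGraph V} {C : Set V} {d w : V} (hdC : d ∈ C)
    (huniq : ∀ x, G.Adj d x → x = w) :
    ∀ {u v : V}, (delVerts G (C \ {d})).Walk u v → v ≠ d →
      (delVerts G C).Reachable (if u = d then w else u) v := by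
  intro u v p
  induction p with
  | nil =>
      intro hv
      rw [if_neg hv]
  | @cons a b c hab q ih =>
      intro hv
      by_cases hb : b = d
      · have hab' : G.Adj a d := by rw [← hb]; exact hab.1
        have ha : a = w := huniq a hab'.symm
        have had : a ≠ d := fun h => G.loopless.irrefl d (h ▸ hab')
        rw [if_neg had, ha]
        have := ih hv
        rw [if_pos hb] at this
        exact this
      · have h2 := ih hv
        rw [if_neg hb] at h2
        by_cases ha : a = d
        · subst ha
          have hb' : b = w := huniq b hab.1
          rw [if_pos rfl, ← hb']
          exact h2
        · rw [if_neg ha]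
          have hadj : (delVerts G C).Adj a b :=
            ⟨hab.1, fun hc => hab.2.1 ⟨hc, ha⟩, fun hc => hab.2.2 ⟨hc, hb⟩⟩
          exact hadj.reachable.trans h2

lemma pendant_reach [DecidableEq V] {G : SimpleGraph V} {C : Set V} {d w : V} (hdC : d ∈ C)
    (huniq : ∀ x, G.Adj d x → x = w) {u v : V}
    (h : (delVerts G (C \ {d})).Reachable u v) (hu : u ≠ d) (hv : v ≠ d) :
    (delVerts G C).Reachable u v := by
  obtain ⟨p⟩ := h
  have := pendant_walk hdC huniq p hv
  rwa [if_neg hu] at this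

lemma pendant_reach_d [DecidableEq V] {G : SimpleGraph V} {C : Set V} {d w : V} (hdC : d ∈ C)
    (huniq : ∀ x, G.Adj d x → x = w) {v : V}
    (h : (delVerts G (C \ {d})).Reachable d v) (hv : v ≠ d) :
    (delVerts G C).Reachable w v := by
  obtain ⟨p⟩ := h
  have := pendant_walk hdC huniq p hv
  rwa [if_pos rfl] at this

lemma heal_le_sq [Fintype V] (H : SimpleGraph V) (A : Set V) :
    heal H A ≤ (Fintype.card V) ^ 2 := by
  classical
  have h1 : (healPairs H A).ncard ≤ (Set.univ : Set (Sym2 V)).ncard :=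
    Set.ncard_le_ncard (Set.subset_univ _) (Set.toFinite _)
  rw [Set.ncard_univ] at h1
  have hs : Function.Surjective (fun p : V × V => s(p.1, p.2)) := by
    intro z
    induction z using Sym2.ind with
    | _ a b => exact ⟨(a, b), rfl⟩
  have h2 : Nat.card (Sym2 V) ≤ Nat.card (V × V) :=
    Nat.card_le_card_of_surjective _ hs
  have h3 : Nat.card (V × V) = Fintype.card V ^ 2 := by
    simp [Nat.card_eq_fintype_card, sq]
  exact h1.trans (h2.trans_eq h3)

lemma Phi_le_Phi [Fintype V] (G : SimpleGraph V) (A : Set V) {C C' : Set V}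
    (h1 : vul (delVerts G C') A ≤ vul (delVerts G C) A)
    (h2 : heal (delVerts G C) A ≤ heal (delVerts G C') A) :
    Phi G A C' ≤ Phi G A C := by
  unfold Phi
  have hM : (0 : ℤ) ≤ (Fintype.card V : ℤ) ^ 2 + 1 := by positivity
  have h1' : (vul (delVerts G C') A : ℤ) ≤ (vul (delVerts G C) A : ℤ) := by exact_mod_cast h1
  have h2' : (heal (delVerts G C) A : ℤ) ≤ (heal (delVerts G C') A : ℤ) := by exact_mod_cast h2
  have := mul_le_mul_of_nonneg_left h1' hM
  linarith

lemma Phi_le_of_vul_lt [Fintype V] (G : SimpleGraph V) (A : Set V) {C C' : Set V}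
    (h1 : vul (delVerts G C') A < vul (delVerts G C) A) :
    Phi G A C' ≤ Phi G A C := by
  have hb := heal_le_sq (delVerts G C) A
  unfold Phi
  have h1' : (vul (delVerts G C') A : ℤ) + 1 ≤ (vul (delVerts G C) A : ℤ) := by exact_mod_cast h1
  have hb' : (heal (delVerts G C) A : ℤ) ≤ (Fintype.card V : ℤ) ^ 2 := by exact_mod_cast hb
  have hh : (0 : ℤ) ≤ (heal (delVerts G C') A : ℤ) := by positivity
  have hM : (0 : ℤ) ≤ (Fintype.card V : ℤ) ^ 2 + 1 := by positivity
  have := mul_le_mul_of_nonneg_left h1' hM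
  linarith

end Aux

/-- The transformation step in the proof of Proposition 1. -/
theorem transformation_step
    {V : Type*} [Fintype V] (G : SimpleGraph V) (A : Set V)
    (D : Set V) (hD : D = {v | v ∉ A ∧ ∃! w, G.Adj v w})
    (C : Set V) (hC : C ∩ D ≠ ∅) :
    ∃ C' : Set V, C'.ncard ≤ C.ncard ∧ Phi G A C' ≤ Phi G A C ∧
      (C' ∩ D).ncard < (C ∩ D).ncard := by
  classical
  obtain ⟨d, hdC, hdD⟩ := Set.nonempty_iff_ne_empty.2 hC
  have hdD' := hdD
  rw [hD] at hdD'
  obtain ⟨hdA, w, hw, huniq⟩ := hdD'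
  have hwd : w ≠ d := fun h => G.loopless.irrefl d (h ▸ hw)
  -- condition (c) reduces to a subset statement
  have hcD : ∀ C' : Set V, C' ∩ D ⊆ (C ∩ D) \ {d} →
      (C' ∩ D).ncard < (C ∩ D).ncard := by
    intro C' hsub
    have h1 : (C' ∩ D).ncard ≤ ((C ∩ D) \ {d}).ncard :=
      Set.ncard_le_ncard hsub (Set.toFinite _)
    have h2 : ((C ∩ D) \ {d}).ncard < (C ∩ D).ncard :=
      Set.ncard_diff_singleton_lt_of_mem ⟨hdC, hdD⟩ (Set.toFinite _)
    omega
  -- size bound for the swapped set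
  have hsize : (insert w (C \ {d})).ncard ≤ C.ncard := by
    have h1 := Set.ncard_insert_le w (C \ {d})
    have h2 : (C \ {d}).ncard = C.ncard - 1 :=
      Set.ncard_diff_singleton_of_mem hdC
    have h3 : 0 < C.ncard := (Set.ncard_pos (Set.toFinite _)).2 ⟨d, hdC⟩
    omega
  -- adjacency key: in `G - (insert w (C \ {d}))` no edge endpoint lies in `C`
  have hkey2 : ∀ u v, G.Adj u v → u ∉ insert w (C \ {d}) → v ∉ insert w (C \ {d}) →
      u ∉ C := by
    intro u v hadj hu hv huC
    have hud : u = d := by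
      by_contra h
      exact hu (Set.mem_insert_of_mem _ ⟨huC, h⟩)
    subst hud
    have hvw : v = w := huniq v hadj
    exact hv (hvw ▸ Set.mem_insert _ _)
  by_cases hQ : ∃ x, x ≠ w ∧ (delVerts G C).Reachable w x ∧ (w ∈ A ∨ x ∈ A)
  · -- Case 1: swap d for w; a vulnerable pair at w is destroyed.
    obtain ⟨x, hxw, hreach, hAwx⟩ := hQ
    refine ⟨insert w (C \ {d}), hsize, ?_, ?_⟩
    · -- Phi decreases since vul strictly drops
      have hle : delVerts G (insert w (C \ {d})) ≤ delVerts G C := by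
        intro u v huv
        exact ⟨huv.1, hkey2 u v huv.1 huv.2.1 huv.2.2,
          hkey2 v u huv.1.symm huv.2.2 huv.2.1⟩
      have hwC' : w ∈ insert w (C \ {d}) := Set.mem_insert _ _
      have hwiso : ∀ z, ¬ (delVerts G (insert w (C \ {d}))).Adj w z :=
        fun z hz => hz.2.1 hwC'
      have hnot : s(w, x) ∉ vulPairs (delVerts G (insert w (C \ {d}))) A := by
        rintro ⟨a, b, hab, hne, hr, _⟩
        rw [Sym2.eq_iff] at hab
        rcases hab with ⟨rfl, rfl⟩ | ⟨rfl, rfl⟩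
        · exact hxw (reach_self_of_iso hwiso hr)
        · exact hxw (reach_self_of_iso hwiso hr.symm)
      have hmem : s(w, x) ∈ vulPairs (delVerts G C) A :=
        ⟨w, x, rfl, fun h => hxw h.symm, hreach, hAwx⟩
      have hss : vulPairs (delVerts G (insert w (C \ {d}))) A ⊂ vulPairs (delVerts G C) A :=
        ⟨vulPairs_mono hle A, fun hsub => hnot (hsub hmem)⟩
      exact Phi_le_of_vul_lt G A (Set.ncard_lt_ncard hss (Set.toFinite _))
    · -- condition (c): w ∉ D
      apply hcD
      have hwD : w ∉ D := by
        intro hwDm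
        rw [hD] at hwDm
        obtain ⟨hwA, w', hw', huniq'⟩ := hwDm
        have hno : ∀ z, ¬ (delVerts G C).Adj w z := by
          intro z hz
          have hz1 : z = w' := huniq' z hz.1
          have hz2 : d = w' := huniq' d hw.symm
          exact hz.2.2 ((hz1.trans hz2.symm) ▸ hdC)
        exact hxw (reach_self_of_iso hno hreach)
      rintro y ⟨hy1, hy2⟩
      rcases hy1 with rfl | ⟨hyC, hyd⟩
      · exact absurd hy2 hwD
      · exact ⟨⟨hyC, hy2⟩, hyd⟩
  · by_cases hwA : w ∈ A
    · -- Case 2: w ∈ A but w is isolated in G - C; swap d for w, graph unchanged.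
      have hiso : ∀ z, ¬ (delVerts G C).Adj w z := by
        intro z hz
        have hzw : z ≠ w := fun h => (delVerts G C).loopless.irrefl w (h ▸ hz)
        exact hQ ⟨z, hzw, hz.reachable, Or.inl hwA⟩
      have hEq : delVerts G (insert w (C \ {d})) = delVerts G C := by
        ext u v
        constructor
        · rintro ⟨hadj, hu, hv⟩
          exact ⟨hadj, hkey2 u v hadj hu hv, hkey2 v u hadj.symm hv hu⟩
        · rintro ⟨hadj, huC, hvC⟩
          refine ⟨hadj, ?_, ?_⟩
          · rintro (rfl | ⟨hu1, _⟩)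
            · exact hiso v ⟨hadj, huC, hvC⟩
            · exact huC hu1
          · rintro (rfl | ⟨hv1, _⟩)
            · exact hiso u ⟨hadj.symm, hvC, huC⟩
            · exact hvC hv1
      refine ⟨insert w (C \ {d}), hsize, ?_, ?_⟩
      · simp [Phi, hEq]
      · apply hcD
        have hwD : w ∉ D := by
          intro hwDm
          rw [hD] at hwDm
          exact hwDm.1 hwA
        rintro y ⟨hy1, hy2⟩
        rcases hy1 with rfl | ⟨hyC, hyd⟩
        · exact absurd hy2 hwD
        · exact ⟨⟨hyC, hy2⟩, hyd⟩
    · -- Case 3: just remove d from C.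
      refine ⟨C \ {d}, Set.ncard_le_ncard Set.diff_subset (Set.toFinite _), ?_, ?_⟩
      · apply Phi_le_Phi
        · -- vul does not increase
          apply Set.ncard_le_ncard _ (Set.toFinite _)
          rintro p ⟨u, v, rfl, hne, hr, hA⟩
          have key : ∀ a b : V, a ≠ b → (delVerts G (C \ {d})).Reachable a b →
              (a ∈ A ∨ b ∈ A) → a = d → False := by
            intro a b hab hr2 hA2 ha
            rw [ha] at hab hr2 hA2
            have hbA : b ∈ A := hA2.resolve_left hdA
            have hbd : b ≠ d := fun h => hab h.symm
            have hrw : (delVerts G C).Reachable w b := pendant_reach_d hdC huniq hr2 hbd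
            by_cases hbw : b = w
            · exact hwA (hbw ▸ hbA)
            · exact hQ ⟨b, hbw, hrw, Or.inr hbA⟩
          have hud : u ≠ d := fun h => key u v hne hr hA h
          have hvd : v ≠ d := fun h => key v u hne.symm hr.symm hA.symm h
          exact ⟨u, v, rfl, hne, pendant_reach hdC huniq hr hud hvd, hA⟩
        · -- heal does not decrease
          apply Set.ncard_le_ncard _ (Set.toFinite _)
          apply healPairs_mono
          intro u v huv
          exact ⟨huv.1, fun hc => huv.2.1 hc.1, fun hc => huv.2.2 hc.1⟩
      · apply hcD
        rintro y ⟨⟨hyC, hyd⟩, hy2⟩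
        exact ⟨⟨hyC, hy2⟩, hyd⟩
end

section
/- Let G=(V,E) be a finite simple graph, A ⊆ V, and C ⊆ V. Let v ∈ C be a vertex of degree one in G with v ∉ A, let X be the vertex set of the connected component of G−(C\{v}) containing v, and suppose A ∩ X ≠ ∅. Let w be the unique neighbor of v in G and suppose w ∉ A. Then, for C' := (C\{v}) ∪ {w}, it holds that vul(G−C') ≤ vul(G−C) − |A ∩ X|, and consequently Φ(G−C') < Φ(G−C). (Case 1 in the proof of Proposition 1.) -/
/-- If `v`'s only neighbor in `H` is `w`, any nontrivial walk from `v` has `w` as second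
vertex, so `w` lies in the tail of the support. -/
private lemma tail_mem_w {V : Type*} {H : SimpleGraph V} {v w : V}
    (hadj : ∀ u, H.Adj v u → u = w) :
    ∀ {y : V} (s : H.Walk v y), y ≠ v → w ∈ s.support.tail := by
  intro y s hy
  cases s with
  | nil => exact absurd rfl hy
  | cons h q =>
    have hu := hadj _ h
    subst hu
    rw [SimpleGraph.Walk.support_cons, List.tail_cons]
    exact q.start_mem_support

/-- Key lemma: if `v`'s only `G`-neighbor is `w`, then reachability in `G − (C \ {v})`
between vertices different from `v` implies reachability in `G − C`. -/
private lemma reach_avoid {V : Type*} {G : SimpleGraph V} {C : Set V} {v w : V}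
    (hw : ∀ u, G.Adj v u ↔ u = w) {x y : V} (hx : x ≠ v) (hy : y ≠ v)
    (h : (delVerts G (C \ {v})).Reachable x y) : (delVerts G C).Reachable x y := by
  classical
  have hadj : ∀ u, (delVerts G (C \ {v})).Adj v u → u = w := fun u h' => (hw u).mp h'.1
  obtain ⟨p0⟩ := h
  obtain ⟨p, hp⟩ := p0.toPath
  -- `v` is not on the path `p`
  have hvs : v ∉ p.support := by
    intro hv
    have hnd := hp.support_nodup
    rw [← SimpleGraph.Walk.take_spec p hv, SimpleGraph.Walk.support_append,
      List.nodup_append] at hnd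
    have hq : w ∈ (p.takeUntil v hv).support := by
      have h1 := tail_mem_w hadj ((p.takeUntil v hv).reverse) hx
      have h2 : w ∈ (p.takeUntil v hv).reverse.support := List.mem_of_mem_tail h1
      rwa [SimpleGraph.Walk.support_reverse, List.mem_reverse] at h2
    have hr : w ∈ (p.dropUntil v hv).support.tail := tail_mem_w hadj _ hy
    exact hnd.2.2 w hq w hr rfl
  -- all edges of `p` are edges of `G − C`
  have hedges : ∀ e ∈ p.edges, e ∈ (delVerts G C).edgeSet := by
    intro e he
    induction e using Sym2.ind with
    | _ a b =>
      have hab : (delVerts G (C \ {v})).Adj a b := p.adj_of_mem_edges he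
      have ha : a ∈ p.support := p.fst_mem_support_of_mem_edges he
      have hb : b ∈ p.support := p.snd_mem_support_of_mem_edges he
      have hav : a ≠ v := fun h' => hvs (h' ▸ ha)
      have hbv : b ≠ v := fun h' => hvs (h' ▸ hb)
      refine (SimpleGraph.mem_edgeSet _).mpr ⟨hab.1, ?_, ?_⟩
      · exact fun haC => hab.2.1 (Set.mem_diff_singleton.mpr ⟨haC, hav⟩)
      · exact fun hbC => hab.2.2 (Set.mem_diff_singleton.mpr ⟨hbC, hbv⟩)
  exact ⟨p.transfer _ hedges⟩

/-- If `v`'s only neighbor in `H` is `w`, then everything reachable from `v`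
(other than `v`) is reachable from `w`. -/
private lemma reach_from_w {V : Type*} {H : SimpleGraph V} {v w : V}
    (hadj : ∀ u, H.Adj v u → u = w) {a : V} (h : H.Reachable v a) (ha : a ≠ v) :
    H.Reachable w a := by
  obtain ⟨s⟩ := h
  cases s with
  | nil => exact absurd rfl ha
  | cons h' q =>
    have hu := hadj _ h'
    subst hu
    exact ⟨q⟩

/-- Case 1 in the proof of Proposition 1: the unique neighbor `w` of `v` is non-attacked. -/
theorem case_one_nonattacked_neighbor
    {V : Type*} [Fintype V] (G : SimpleGraph V) (A C : Set V) (v w : V)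
    (hvC : v ∈ C) (hvA : v ∉ A)
    (hw : ∀ u, G.Adj v u ↔ u = w)
    (X : Set V) (hX : X = comp (delVerts G (C \ {v})) v)
    (hAX : A ∩ X ≠ ∅) (hwA : w ∉ A) :
    (vul (delVerts G ((C \ {v}) ∪ {w})) A : ℤ)
        ≤ (vul (delVerts G C) A : ℤ) - ((A ∩ X).ncard : ℤ) ∧
      Phi G A ((C \ {v}) ∪ {w}) < Phi G A C := by
  classical
  have hGvw : G.Adj v w := (hw w).mpr rfl
  have hadj : ∀ u, (delVerts G (C \ {v})).Adj v u → u = w := fun u h' => (hw u).mp h'.1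
  -- the new graph is a subgraph of the old one
  have hle : delVerts G ((C \ {v}) ∪ {w}) ≤ delVerts G C := by
    intro a b hab
    obtain ⟨hGab, ha, hb⟩ := hab
    rw [Set.mem_union, not_or] at ha hb
    refine ⟨hGab, ?_, ?_⟩
    · intro haC
      rcases eq_or_ne a v with rfl | hav
      · exact hb.2 (Set.mem_singleton_iff.mpr ((hw b).mp hGab))
      · exact ha.1 (Set.mem_diff_singleton.mpr ⟨haC, hav⟩)
    · intro hbC
      rcases eq_or_ne b v with rfl | hbv
      · exact ha.2 (Set.mem_singleton_iff.mpr ((hw a).mp hGab.symm))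
      · exact hb.1 (Set.mem_diff_singleton.mpr ⟨hbC, hbv⟩)
  have hsub : vulPairs (delVerts G ((C \ {v}) ∪ {w})) A ⊆ vulPairs (delVerts G C) A := by
    rintro p ⟨u, u', rfl, hne, hre, hA⟩
    exact ⟨u, u', rfl, hne, hre.mono hle, hA⟩
  -- `w` is unreachable from anything else in the new graph
  have hnr : ∀ z, z ≠ w → ¬ (delVerts G ((C \ {v}) ∪ {w})).Reachable w z := by
    intro z hz hr
    obtain ⟨s⟩ := hr
    cases s with
    | nil => exact hz rfl
    | cons h' q => exact h'.2.1 (Set.mem_union_right _ rfl)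
  -- each attacked vertex of `X` is reachable from `w` in `G − C`
  have hreach : ∀ a ∈ A ∩ X, (delVerts G C).Reachable a w := by
    intro a ha
    have hav : a ≠ v := fun h' => hvA (h' ▸ ha.1)
    have hvx : (delVerts G (C \ {v})).Reachable v a := by
      have := ha.2; rwa [hX] at this
    have hwa : (delVerts G (C \ {v})).Reachable w a := reach_from_w hadj hvx hav
    exact (reach_avoid hw hGvw.ne' hav hwa).symm
  set S : Set (Sym2 V) := (fun a => s(a, w)) '' (A ∩ X) with hS
  have hSsub : S ⊆ vulPairs (delVerts G C) A := by
    rintro _ ⟨a, ha, rfl⟩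
    exact ⟨a, w, rfl, fun h' => hwA (h' ▸ ha.1), hreach a ha, Or.inl ha.1⟩
  have hdisj : Disjoint (vulPairs (delVerts G ((C \ {v}) ∪ {w})) A) S := by
    rw [Set.disjoint_left]
    rintro p hp ⟨a, ha, rfl⟩
    have haw : a ≠ w := fun h' => hwA (h' ▸ ha.1)
    obtain ⟨u, u', hpe, hne, hre, _⟩ := hp
    rw [Sym2.eq_iff] at hpe
    rcases hpe with ⟨h1, h2⟩ | ⟨h1, h2⟩
    · rw [← h1, ← h2] at hre
      exact hnr a haw hre.symm
    · rw [← h1, ← h2] at hre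
      exact hnr a haw hre
  have hinj : Set.InjOn (fun a => s(a, w)) (A ∩ X) := by
    intro a _ b _ h'
    simp only at h'
    rw [Sym2.eq_iff] at h'
    rcases h' with ⟨h1, _⟩ | ⟨h1, h2⟩
    · exact h1
    · exact h1.trans h2
  have hcount : vul (delVerts G ((C \ {v}) ∪ {w})) A + (A ∩ X).ncard
      ≤ vul (delVerts G C) A := by
    have h1 : (vulPairs (delVerts G ((C \ {v}) ∪ {w})) A ∪ S).ncard
        = (vulPairs (delVerts G ((C \ {v}) ∪ {w})) A).ncard + S.ncard :=
      Set.ncard_union_eq hdisj (Set.toFinite _) (Set.toFinite _)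
    have h2 : (vulPairs (delVerts G ((C \ {v}) ∪ {w})) A ∪ S).ncard
        ≤ (vulPairs (delVerts G C) A).ncard :=
      Set.ncard_le_ncard (Set.union_subset hsub hSsub) (Set.toFinite _)
    have h3 : S.ncard = (A ∩ X).ncard := Set.ncard_image_of_injOn hinj
    unfold vul
    omega
  have hfirst : (vul (delVerts G ((C \ {v}) ∪ {w})) A : ℤ)
      ≤ (vul (delVerts G C) A : ℤ) - ((A ∩ X).ncard : ℤ) := by
    omega
  refine ⟨hfirst, ?_⟩
  -- bound on healthiness
  have hheal : heal (delVerts G C) A ≤ Fintype.card V ^ 2 := by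
    have h1 : heal (delVerts G C) A ≤ Nat.card (Sym2 V) := by
      rw [← Set.ncard_univ]
      exact Set.ncard_le_ncard (Set.subset_univ _) (Set.toFinite _)
    have hsurj : Function.Surjective (fun x : V × V => s(x.1, x.2)) := fun p =>
      Sym2.ind (f := fun p => ∃ x : V × V, s(x.1, x.2) = p) (fun a b => ⟨(a, b), rfl⟩) p
    have h2 : Nat.card (Sym2 V) ≤ Nat.card (V × V) :=
      Nat.card_le_card_of_surjective _ hsurj
    have h3 : Nat.card (V × V) = Fintype.card V ^ 2 := by
      rw [Nat.card_eq_fintype_card, Fintype.card_prod, sq]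
    omega
  have hk : 1 ≤ (A ∩ X).ncard :=
    (Set.ncard_pos (Set.toFinite _)).mpr (Set.nonempty_iff_ne_empty.mpr hAX)
  simp only [Phi]
  have hm : ((Fintype.card V : ℤ) ^ 2 + 1) * (vul (delVerts G ((C \ {v}) ∪ {w})) A : ℤ)
      ≤ ((Fintype.card V : ℤ) ^ 2 + 1) * ((vul (delVerts G C) A : ℤ) - 1) := by
    apply mul_le_mul_of_nonneg_left _ (by positivity)
    omega
  rw [mul_sub, mul_one] at hm
  have hh2 : (0 : ℤ) ≤ (heal (delVerts G ((C \ {v}) ∪ {w})) A : ℤ) := Nat.cast_nonneg _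
  have hh1 : (heal (delVerts G C) A : ℤ) ≤ (Fintype.card V : ℤ) ^ 2 := by
    exact_mod_cast hheal
  linarith
end

section
/- Let G=(V,E) be a finite simple graph, A ⊆ V, and C ⊆ V. Let v ∈ C be a vertex of degree one in G with v ∉ A, let X be the vertex set of the connected component of G−(C\{v}) containing v, and let w be the unique neighbor of v in G with w ∈ A. Then, for C' := (C\{v}) ∪ {w}, it holds that vul(G−C') ≤ vul(G−C) − (|X| − 2). (Case 2 in the proof of Proposition 1.) -/
private lemma reachable_eq_of_isolated {V : Type*} {H : SimpleGraph V} {w u : V}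
    (h : ∀ y, ¬ H.Adj w y) (hr : H.Reachable w u) : w = u := by
  obtain ⟨p⟩ := hr
  cases p with
  | nil => rfl
  | cons h' _ => exact absurd h' (h _)

private lemma walk_avoid_s4 {V : Type*} (G : SimpleGraph V) (C : Set V) (v w : V)
    (hw : ∀ u, G.Adj v u ↔ u = w) :
    ∀ (n : ℕ) (a b : V) (p : (delVerts G (C \ {v})).Walk a b), p.length ≤ n → a ≠ v → b ≠ v →
      (delVerts G C).Reachable a b := by
  intro n
  induction n with
  | zero =>
    intro a b p hp ha hb
    cases p with
    | nil => exact SimpleGraph.Reachable.refl a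
    | cons h q => simp at hp
  | succ n ih =>
    intro a b p hp ha hb
    cases p with
    | nil => exact SimpleGraph.Reachable.refl a
    | @cons _ c _ h q =>
      by_cases hc : c = v
      · subst hc
        have haw : a = w := (hw a).mp (h.1.symm)
        cases q with
        | nil => exact absurd rfl hb
        | @cons _ d _ h' q' =>
          have hd : d = w := (hw d).mp h'.1
          subst hd
          subst haw
          refine ih a b q' ?_ ha hb
          simp only [SimpleGraph.Walk.length_cons] at hp
          omega
      · have hac : (delVerts G C).Adj a c := by
          refine ⟨h.1, ?_, ?_⟩
          · intro haC
            exact h.2.1 ⟨haC, by simpa using ha⟩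
          · intro hcC
            exact h.2.2 ⟨hcC, by simpa using hc⟩
        refine (SimpleGraph.Adj.reachable hac).trans (ih c b q ?_ hc hb)
        simp only [SimpleGraph.Walk.length_cons] at hp
        omega

/-- Case 2 in the proof of Proposition 1: the unique neighbor `w` of `v` is attacked. -/
theorem case_two_attacked_neighbor
    {V : Type*} [Fintype V] (G : SimpleGraph V) (A C : Set V) (v w : V)
    (hvC : v ∈ C) (hvA : v ∉ A)
    (hw : ∀ u, G.Adj v u ↔ u = w)
    (X : Set V) (hX : X = comp (delVerts G (C \ {v})) v)
    (hwA : w ∈ A) :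
    (vul (delVerts G ((C \ {v}) ∪ {w})) A : ℤ)
        ≤ (vul (delVerts G C) A : ℤ) - ((X.ncard : ℤ) - 2) := by
  classical
  have hAdjvw : G.Adj v w := (hw w).mpr rfl
  have hvw : v ≠ w := hAdjvw.ne
  set H := delVerts G C with hH
  set H' := delVerts G ((C \ {v}) ∪ {w}) with hH'
  set H₀ := delVerts G (C \ {v}) with hH0
  -- H' ≤ H
  have hle : H' ≤ H := by
    intro a b hab
    obtain ⟨hGab, ha, hb⟩ := hab
    simp only [Set.mem_union, Set.mem_diff, Set.mem_singleton_iff, not_or] at ha hb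
    refine ⟨hGab, ?_, ?_⟩
    · intro haC
      have hav : a = v := by
        by_contra hne
        exact ha.1 ⟨haC, hne⟩
      subst hav
      exact hb.2 ((hw b).mp hGab)
    · intro hbC
      have hbv : b = v := by
        by_contra hne
        exact hb.1 ⟨hbC, hne⟩
      subst hbv
      exact ha.2 ((hw a).mp hGab.symm)
  have hisol : ∀ y, ¬ H'.Adj w y := by
    intro y hy
    exact hy.2.1 (Set.mem_union_right _ rfl)
  set S : Set (Sym2 V) := (fun x => s(w, x)) '' (X \ {v, w}) with hS
  have hSsub : S ⊆ vulPairs H A := by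
    rintro p ⟨x, hx, rfl⟩
    obtain ⟨hxX, hxvw⟩ := hx
    simp only [Set.mem_insert_iff, Set.mem_singleton_iff, not_or] at hxvw
    have hreach0 : H₀.Reachable v x := by rw [hX] at hxX; exact hxX
    -- w ∉ C \ {v}
    obtain ⟨p⟩ := hreach0
    have hp : H₀.Reachable w x ∧ w ∉ (C \ {v} : Set V) := by
      cases p with
      | nil => exact absurd rfl (Ne.symm hxvw.1)
      | @cons _ d _ h q =>
        have hd : d = w := (hw d).mp h.1
        subst hd
        exact ⟨SimpleGraph.Walk.reachable q, h.2.2⟩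
    obtain ⟨p'⟩ := hp.1
    have hreach : H.Reachable w x :=
      walk_avoid_s4 G C v w hw p'.length w x p' le_rfl hvw.symm hxvw.1
    exact ⟨w, x, rfl, Ne.symm hxvw.2, hreach, Or.inl hwA⟩
  have hP'sub : vulPairs H' A ⊆ vulPairs H A \ S := by
    rintro p ⟨u, u', rfl, hne, hr, hA⟩
    constructor
    · exact ⟨u, u', rfl, hne, hr.mono hle, hA⟩
    · rintro ⟨x, hx, hpx⟩
      rw [Sym2.eq_iff] at hpx
      rcases hpx with ⟨rfl, rfl⟩ | ⟨rfl, rfl⟩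
      · exact hne (reachable_eq_of_isolated hisol hr)
      · exact hne (reachable_eq_of_isolated hisol hr.symm).symm
  have hfin : (vulPairs H A).Finite := Set.toFinite _
  have h1 : (vulPairs H' A).ncard ≤ (vulPairs H A).ncard - S.ncard := by
    calc (vulPairs H' A).ncard ≤ (vulPairs H A \ S).ncard :=
          Set.ncard_le_ncard hP'sub hfin.diff
      _ = (vulPairs H A).ncard - S.ncard := Set.ncard_diff hSsub (Set.toFinite _)
  have hSle : S.ncard ≤ (vulPairs H A).ncard := Set.ncard_le_ncard hSsub hfin
  have h2 : S.ncard = (X \ {v, w}).ncard := by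
    refine Set.ncard_image_of_injOn ?_
    intro x hx y hy hxy
    simp only [Set.mem_diff, Set.mem_insert_iff, Set.mem_singleton_iff, not_or] at hx hy
    rw [Sym2.eq_iff] at hxy
    rcases hxy with ⟨_, h⟩ | ⟨h, h'⟩
    · exact h
    · exact absurd h.symm hy.2.2
  have h3 : X.ncard ≤ (X \ {v, w}).ncard + 2 := by
    have hsub : X ⊆ (X \ {v, w}) ∪ {v, w} := by
      intro x hx
      by_cases hx' : x ∈ ({v, w} : Set V)
      · exact Set.mem_union_right _ hx'
      · exact Set.mem_union_left _ ⟨hx, hx'⟩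
    calc X.ncard ≤ ((X \ {v, w}) ∪ {v, w}).ncard := Set.ncard_le_ncard hsub (Set.toFinite _)
      _ ≤ (X \ {v, w}).ncard + ({v, w} : Set V).ncard := Set.ncard_union_le _ _
      _ ≤ (X \ {v, w}).ncard + 2 := by
          have : ({v, w} : Set V).ncard ≤ 2 := by
            calc ({v, w} : Set V).ncard ≤ ({w} : Set V).ncard + 1 := Set.ncard_insert_le _ _
              _ = 2 := by rw [Set.ncard_singleton]
          omega
  unfold vul
  rw [hH, hH'] at *
  omega
end
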